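/- Let p be a prime and set f := t₁² + p³·t₀·t₁ + p³·(t₀ + p) and g := t₁² + p³·(t₀ + p) in ℤ_p[[t₀,t₁]]. Let ζ be a p-power root of unity with ζ ≠ 1, put δ := ζ − 1, and let 𝒪_ζ := ℤ_p[ζ] be the ring of integers of ℚ_p(ζ). Then in 𝒪_ζ[[t₀]] the principal ideals generated by the specializations f(t₀,δ) and g(t₀,δ) both equal the ideal (δ²); in particular (f(t₀,ζ−1)) = (g(t₀,ζ−1)). -/

import Mathlib

/-- `EvalsTo φ f x y` says that `y` is the value `f(x)` of the power series `f`
(with coefficients pushed forward along `φ`): for every `N`, `y` agrees with the `N`-th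
partial sum of `∑ φ(aₙ)xⁿ` modulo `x^N`. -/
def EvalsTo {R S : Type*} [CommRing R] [CommRing S] (φ : R →+* S)
    (f : PowerSeries R) (x y : S) : Prop :=
  ∀ N : ℕ, x ^ N ∣ (y - ∑ n ∈ Finset.range N, φ (PowerSeries.coeff (R := R) n f) * x ^ n)

/-- `SpecAt φ x h H` says that `H ∈ S[[t₀]]` is the specialisation `h(t₀,x)` of
`h ∈ (R[[t₁]])[[t₀]]`. -/
def SpecAt {R S : Type*} [CommRing R] [CommRing S] (φ : R →+* S) (x : S)
    (h : PowerSeries (PowerSeries R)) (H : PowerSeries S) : Prop :=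
  ∀ k : ℕ, EvalsTo φ (PowerSeries.coeff (R := PowerSeries R) k h) x (PowerSeries.coeff (R := S) k H)

/-- Krull intersection: an element divisible by all powers of a non-unit is zero. -/
lemma aux_dvd_pow_zero {R : Type*} [CommRing R] [IsDomain R] [IsNoetherianRing R]
    {δ : R} (hδ : ¬IsUnit δ) {x : R} (h : ∀ N : ℕ, δ ^ N ∣ x) : x = 0 := by
  have hx : x ∈ ⨅ i : ℕ, (Ideal.span {δ}) ^ i := by
    rw [Ideal.mem_iInf]
    intro i
    rw [Ideal.span_singleton_pow]
    exact Ideal.mem_span_singleton.2 (h i)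
  rwa [Ideal.iInf_pow_eq_bot_of_isDomain _
    (by simpa [Ne, Ideal.span_singleton_eq_top] using hδ), Ideal.mem_bot] at hx

lemma aux_sum {S : Type*} [CommRing S] (a b : S) (δ : S) {i j : ℕ} (M : ℕ)
    (hi : i < M) (hj : j < M) :
    ∑ n ∈ Finset.range M, ((if n = i then a else 0) + (if n = j then b else 0)) * δ ^ n
      = a * δ ^ i + b * δ ^ j := by
  simp [add_mul, Finset.sum_add_distrib, ite_mul, Finset.sum_ite_eq', hi, hj]

lemma aux_coeff_form {S : Type*} [CommRing S] (A B : S) (n : ℕ) :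
    (PowerSeries.coeff (R := S) n) (PowerSeries.C (R := S) A + PowerSeries.C (R := S) B * PowerSeries.X)
      = (if n = 0 then A else 0) + (if n = 1 then B else 0) := by
  rw [map_add, PowerSeries.coeff_C]
  rcases n with _ | n
  · simp [PowerSeries.coeff_zero_eq_constantCoeff, map_mul]
  · rw [PowerSeries.coeff_succ_mul_X, PowerSeries.coeff_C]
    simp [Nat.succ_ne_zero]

lemma aux_eval {R S : Type*} [CommRing R] [CommRing S] (φ : R →+* S) {δ : S}
    (key : ∀ z : S, (∀ N : ℕ, δ ^ N ∣ z) → z = 0)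
    (h : PowerSeries R) (y : S) (i j : ℕ) (a b : R)
    (hcoeff : ∀ n, PowerSeries.coeff (R := R) n h = (if n = i then a else 0) + (if n = j then b else 0))
    (hev : EvalsTo φ h δ y) : y = φ a * δ ^ i + φ b * δ ^ j := by
  have h0 : y - (φ a * δ ^ i + φ b * δ ^ j) = 0 := by
    apply key
    intro N
    have dvd := hev (N + i + j + 1)
    have hsum : ∑ n ∈ Finset.range (N + i + j + 1), φ (PowerSeries.coeff (R := R) n h) * δ ^ n
        = φ a * δ ^ i + φ b * δ ^ j := by
      have hpt : ∀ n, φ (PowerSeries.coeff (R := R) n h) * δ ^ n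
          = ((if n = i then φ a else 0) + (if n = j then φ b else 0)) * δ ^ n := by
        intro n
        rw [hcoeff n, map_add, apply_ite φ, apply_ite φ]; simp
      rw [Finset.sum_congr rfl fun n _ => hpt n]
      exact aux_sum (φ a) (φ b) δ _ (by omega) (by omega)
    rw [hsum] at dvd
    exact dvd_trans (pow_dvd_pow δ (by omega)) dvd
  exact sub_eq_zero.mp h0


lemma aux_span {S : Type*} [CommRing S] (d a b : S) (F : PowerSeries S)
    (hF : F = PowerSeries.C (R := S) (d ^ 2 * a) + PowerSeries.C (R := S) (d ^ 2 * b) * PowerSeries.X)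
    (ha : IsUnit a) :
    Ideal.span {F} = Ideal.span {PowerSeries.C (R := S) (d ^ 2)} := by
  have hfac : F = PowerSeries.C (R := S) (d ^ 2)
      * (PowerSeries.C (R := S) a + PowerSeries.C (R := S) b * PowerSeries.X) := by
    rw [hF, map_mul, map_mul]
    ring
  have hunit : IsUnit (PowerSeries.C (R := S) a + PowerSeries.C (R := S) b * PowerSeries.X) := by
    rw [PowerSeries.isUnit_iff_constantCoeff]
    simpa using ha
  rw [hfac]
  exact Ideal.span_singleton_mul_right_unit hunit _

set_option maxHeartbeats 2000000 in
/-- for `f := t₁² + p³·t₀·t₁ + p³·(t₀+p)` and `g := t₁² + p³·(t₀+p)` in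
`ℤ_p[[t₀,t₁]]` (modelled as `(ℤ_p[[t₁]])[[t₀]]`, with `t₀ = X`, `t₁ = C X`), a `p`-power root
of unity `ζ ≠ 1` in the ring of integers `𝒪_ζ` of `K = ℚ_p(ζ)` (i.e. the integral closure of
`ℤ_p` in `K`, with `K` generated over `ℚ_p` by `ζ`), and `δ := ζ − 1`: the specialisations
`f(t₀,δ)` and `g(t₀,δ)` both generate the ideal `(δ²)` of `𝒪_ζ[[t₀]]`; in particular they
generate the same ideal. -/
theorem stmt_9 (p : ℕ) [Fact p.Prime]
    (K : Type*) [Field K] [Algebra ℚ_[p] K] [FiniteDimensional ℚ_[p] K]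
    [Algebra ℤ_[p] K] [IsScalarTower ℤ_[p] ℚ_[p] K]
    (ζ : integralClosure ℤ_[p] K) (k : ℕ) (hζ : ζ ^ p ^ k = 1) (hζ1 : ζ ≠ 1)
    (hgen : Algebra.adjoin ℚ_[p] {(ζ : K)} = ⊤)
    (f g : PowerSeries (PowerSeries ℤ_[p]))
    (hf : f = (PowerSeries.C (R := PowerSeries ℤ_[p]) PowerSeries.X) ^ 2 +
        (p : PowerSeries (PowerSeries ℤ_[p])) ^ 3 * PowerSeries.X *
          PowerSeries.C (R := PowerSeries ℤ_[p]) PowerSeries.X +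
        (p : PowerSeries (PowerSeries ℤ_[p])) ^ 3 *
          (PowerSeries.X + (p : PowerSeries (PowerSeries ℤ_[p]))))
    (hg : g = (PowerSeries.C (R := PowerSeries ℤ_[p]) PowerSeries.X) ^ 2 +
        (p : PowerSeries (PowerSeries ℤ_[p])) ^ 3 *
          (PowerSeries.X + (p : PowerSeries (PowerSeries ℤ_[p]))))
    (F G : PowerSeries (integralClosure ℤ_[p] K))
    (hF : SpecAt (algebraMap ℤ_[p] (integralClosure ℤ_[p] K)) (ζ - 1) f F)
    (hG : SpecAt (algebraMap ℤ_[p] (integralClosure ℤ_[p] K)) (ζ - 1) g G) :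
    Ideal.span {F} =
      Ideal.span {PowerSeries.C (R := integralClosure ℤ_[p] K) ((ζ - 1) ^ 2)} ∧
    Ideal.span {G} =
      Ideal.span {PowerSeries.C (R := integralClosure ℤ_[p] K) ((ζ - 1) ^ 2)} ∧
    Ideal.span {F} = Ideal.span {G} := by
  classical
  have hp := Fact.out (p := p.Prime)
  haveI : CharZero K := charZero_of_injective_algebraMap (algebraMap ℚ_[p] K).injective
  haveI : IsDedekindDomain (integralClosure ℤ_[p] K) :=
    integralClosure.isDedekindDomain ℤ_[p] ℚ_[p] K
  have hδ0 : ζ - 1 ≠ 0 := sub_ne_zero.mpr hζ1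
  have hk0 : k ≠ 0 := by rintro rfl; rw [pow_zero, pow_one] at hζ; exact hζ1 hζ
  have hn2 : 2 ≤ p ^ k := by
    calc 2 ≤ p := hp.two_le
    _ ≤ p ^ k := Nat.le_self_pow hk0 p
  -- p is not a unit in the integral closure
  have hpO : ¬ IsUnit (p : integralClosure ℤ_[p] K) := by
    intro hu
    obtain ⟨v, hv⟩ := hu.exists_right_inv
    have hvK : (p : K) * (v : K) = 1 := by
      have := congrArg (algebraMap (integralClosure ℤ_[p] K) K) hv
      simpa using this
    have hpQ0 : (p : ℚ_[p]) ≠ 0 := by exact_mod_cast hp.ne_zero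
    have hveq : (v : K) = algebraMap ℚ_[p] K ((p : ℚ_[p])⁻¹) := by
      rw [map_inv₀, map_natCast]
      exact (eq_inv_of_mul_eq_one_left (by rw [mul_comm] at hvK; exact hvK))
    have hvint : IsIntegral ℤ_[p] (v : K) := v.2
    rw [hveq, isIntegral_algebraMap_iff (algebraMap ℚ_[p] K).injective] at hvint
    obtain ⟨y, hy⟩ := IsIntegrallyClosed.isIntegral_iff.mp hvint
    have hone : (p : ℤ_[p]) * y = 1 := by
      apply IsFractionRing.injective ℤ_[p] ℚ_[p]
      rw [map_mul, map_one, map_natCast, hy, mul_inv_cancel₀ hpQ0]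
    exact mem_nonunits_iff.mp PadicInt.p_nonunit (IsUnit.of_mul_eq_one _ hone)
  -- δ^(p^k - 1) is divisible by p, hence δ is not a unit
  have hδpow : (p : integralClosure ℤ_[p] K) ∣ (ζ - 1) ^ (p ^ k - 1) := by
    have hexp : (1 : integralClosure ℤ_[p] K)
        = ∑ m ∈ Finset.range (p ^ k + 1),
            (ζ - 1) ^ m * 1 ^ (p ^ k - m) * (p ^ k).choose m := by
      rw [← add_pow]
      rw [show ζ - 1 + 1 = ζ by ring, hζ]
    simp only [one_pow, mul_one] at hexp
    rw [Finset.sum_range_succ' _ (p ^ k)] at hexp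
    simp only [Nat.choose_zero_right, Nat.cast_one, pow_zero, one_mul, mul_one] at hexp
    have hzero : ∑ i ∈ Finset.range (p ^ k),
        (ζ - 1) ^ (i + 1) * ((p ^ k).choose (i + 1) : integralClosure ℤ_[p] K) = 0 := by
      linear_combination -hexp
    obtain ⟨n', hn'⟩ : ∃ n', p ^ k = n' + 1 := ⟨p ^ k - 1, by omega⟩
    rw [hn', Finset.sum_range_succ] at hzero
    have htop : (ζ - 1) ^ (n' + 1)
        = - ∑ i ∈ Finset.range n',
            (ζ - 1) ^ (i + 1) * ((n' + 1).choose (i + 1) : integralClosure ℤ_[p] K) := by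
      rw [Nat.choose_self, Nat.cast_one, mul_one] at hzero
      linear_combination hzero
    have hdvd : (p : integralClosure ℤ_[p] K) * (ζ - 1) ∣ (ζ - 1) ^ (n' + 1) := by
      rw [htop]
      apply Dvd.dvd.neg_right
      apply Finset.dvd_sum
      intro i hi
      rw [Finset.mem_range] at hi
      have hchoose : (p : ℕ) ∣ (n' + 1).choose (i + 1) := by
        rw [← hn']
        exact Nat.Prime.dvd_choose_pow hp (by omega) (by omega)
      obtain ⟨m, hm⟩ := hchoose
      exact ⟨(ζ - 1) ^ i * (m : integralClosure ℤ_[p] K), by push_cast [hm]; ring⟩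
    have hres : (p : integralClosure ℤ_[p] K) ∣ (ζ - 1) ^ n' := by
      have h2 : (ζ - 1) * (p : integralClosure ℤ_[p] K) ∣ (ζ - 1) * (ζ - 1) ^ n' := by
        rw [pow_succ'] at hdvd
        rwa [mul_comm (p : integralClosure ℤ_[p] K) (ζ - 1)] at hdvd
      exact (mul_dvd_mul_iff_left hδ0).mp h2
    rwa [show p ^ k - 1 = n' by omega]
  have hδnu : ¬ IsUnit (ζ - 1) := fun hu => hpO (isUnit_of_dvd_unit hδpow (hu.pow _))
  -- δ divides p
  have hδdvdp : (ζ - 1) ∣ (p : integralClosure ℤ_[p] K) := by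
    have hdvd : orderOf ζ ∣ p ^ k := orderOf_dvd_of_pow_eq_one hζ
    obtain ⟨m, hm, hord_eq⟩ := (Nat.dvd_prime_pow hp).1 hdvd
    have hm0 : m ≠ 0 := by
      rintro rfl
      rw [pow_zero] at hord_eq
      exact hζ1 (orderOf_eq_one_iff.mp hord_eq)
    obtain ⟨m', rfl⟩ : ∃ m', m = m' + 1 := ⟨m - 1, by omega⟩
    have hprim : IsPrimitiveRoot ζ (p ^ (m' + 1)) := hord_eq ▸ IsPrimitiveRoot.orderOf ζ
    have hroot := hprim.isRoot_cyclotomic (pow_pos hp.pos _)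
    obtain ⟨q, hq⟩ := (Polynomial.dvd_iff_isRoot).2 hroot
    have hpeval : ((p : integralClosure ℤ_[p] K)) = (1 - ζ) * q.eval 1 := by
      have h1 := Polynomial.eval_one_cyclotomic_prime_pow
        (R := integralClosure ℤ_[p] K) (p := p) m'
      rw [hq] at h1
      rw [← h1]
      simp
    have h2 : (1 - ζ) ∣ (p : integralClosure ℤ_[p] K) := ⟨q.eval 1, hpeval⟩
    rwa [show (1 : integralClosure ℤ_[p] K) - ζ = -(ζ - 1) by ring, neg_dvd] at h2
  obtain ⟨c, hc⟩ := hδdvdp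
  have key : ∀ z : integralClosure ℤ_[p] K, (∀ N : ℕ, (ζ - 1) ^ N ∣ z) → z = 0 :=
    fun z hz => aux_dvd_pow_zero hδnu hz
  -- canonical forms of f and g
  have hcast : ((p : PowerSeries (PowerSeries ℤ_[p])))
      = PowerSeries.C (R := PowerSeries ℤ_[p]) ((p : PowerSeries ℤ_[p])) :=
    (map_natCast (PowerSeries.C (R := PowerSeries ℤ_[p])) p).symm
  have hfC : f = PowerSeries.C (R := PowerSeries ℤ_[p])
        (PowerSeries.X ^ 2 + (p : PowerSeries ℤ_[p]) ^ 4)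
      + PowerSeries.C (R := PowerSeries ℤ_[p])
        ((p : PowerSeries ℤ_[p]) ^ 3 * PowerSeries.X + (p : PowerSeries ℤ_[p]) ^ 3)
        * PowerSeries.X := by
    rw [hf, hcast]
    simp only [map_add, map_mul, map_pow]
    ring
  have hgC : g = PowerSeries.C (R := PowerSeries ℤ_[p])
        (PowerSeries.X ^ 2 + (p : PowerSeries ℤ_[p]) ^ 4)
      + PowerSeries.C (R := PowerSeries ℤ_[p]) ((p : PowerSeries ℤ_[p]) ^ 3)
        * PowerSeries.X := by
    rw [hg, hcast]
    simp only [map_add, map_mul, map_pow]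
    ring
  -- coefficients of the inner series
  have coeffA : ∀ n, PowerSeries.coeff (R := ℤ_[p]) n
        (PowerSeries.X ^ 2 + (p : PowerSeries ℤ_[p]) ^ 4)
      = (if n = 2 then 1 else 0) + (if n = 0 then (p : ℤ_[p]) ^ 4 else 0) := by
    intro n
    rw [map_add, PowerSeries.coeff_X_pow,
      show ((p : PowerSeries ℤ_[p]) ^ 4) = PowerSeries.C (R := ℤ_[p]) ((p : ℤ_[p]) ^ 4) by
        rw [map_pow, map_natCast], PowerSeries.coeff_C]
  have coeffB : ∀ n, PowerSeries.coeff (R := ℤ_[p]) n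
        ((p : PowerSeries ℤ_[p]) ^ 3 * PowerSeries.X + (p : PowerSeries ℤ_[p]) ^ 3)
      = (if n = 1 then (p : ℤ_[p]) ^ 3 else 0) + (if n = 0 then (p : ℤ_[p]) ^ 3 else 0) := by
    intro n
    rw [map_add,
      show ((p : PowerSeries ℤ_[p]) ^ 3) = PowerSeries.C (R := ℤ_[p]) ((p : ℤ_[p]) ^ 3) by
        rw [map_pow, map_natCast], PowerSeries.coeff_C_mul, PowerSeries.coeff_X,
      PowerSeries.coeff_C, mul_ite, mul_one, mul_zero]
  have coeffBg : ∀ n, PowerSeries.coeff (R := ℤ_[p]) n ((p : PowerSeries ℤ_[p]) ^ 3)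
      = (if n = 1 then 0 else 0) + (if n = 0 then (p : ℤ_[p]) ^ 3 else 0) := by
    intro n
    rw [show ((p : PowerSeries ℤ_[p]) ^ 3) = PowerSeries.C (R := ℤ_[p]) ((p : ℤ_[p]) ^ 3) by
        rw [map_pow, map_natCast], PowerSeries.coeff_C]
    simp
  -- coefficients of F
  have hF0 : PowerSeries.coeff (R := integralClosure ℤ_[p] K) 0 F
      = (ζ - 1) ^ 2 + (p : integralClosure ℤ_[p] K) ^ 4 := by
    have hev := hF 0
    rw [hfC, aux_coeff_form] at hev
    simp only [if_pos rfl, if_neg (by norm_num : (0 : ℕ) ≠ 1), add_zero] at hev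
    have := aux_eval (algebraMap ℤ_[p] (integralClosure ℤ_[p] K)) key _ _ 2 0 1
      ((p : ℤ_[p]) ^ 4) coeffA hev
    rw [this]
    simp [map_pow]
  have hF1 : PowerSeries.coeff (R := integralClosure ℤ_[p] K) 1 F
      = (p : integralClosure ℤ_[p] K) ^ 3 * (ζ - 1) + (p : integralClosure ℤ_[p] K) ^ 3 := by
    have hev := hF 1
    rw [hfC, aux_coeff_form] at hev
    simp only [if_pos rfl, if_neg (by norm_num : (1 : ℕ) ≠ 0), zero_add] at hev
    have := aux_eval (algebraMap ℤ_[p] (integralClosure ℤ_[p] K)) key _ _ 1 0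
      ((p : ℤ_[p]) ^ 3) ((p : ℤ_[p]) ^ 3) coeffB hev
    rw [this]
    simp only [map_pow, map_natCast, pow_one, pow_zero, mul_one]
  have hFtail : ∀ j : ℕ, PowerSeries.coeff (R := integralClosure ℤ_[p] K) (j + 2) F = 0 := by
    intro j
    have hev := hF (j + 2)
    rw [hfC, aux_coeff_form] at hev
    simp only [if_neg (by omega : ¬ (j + 2 = 0)), if_neg (by omega : ¬ (j + 2 = 1)),
      add_zero] at hev
    have := aux_eval (algebraMap ℤ_[p] (integralClosure ℤ_[p] K)) key _ _ 0 0 0 0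
      (by simp) hev
    rw [this]
    simp
  -- coefficients of G
  have hG0 : PowerSeries.coeff (R := integralClosure ℤ_[p] K) 0 G
      = (ζ - 1) ^ 2 + (p : integralClosure ℤ_[p] K) ^ 4 := by
    have hev := hG 0
    rw [hgC, aux_coeff_form] at hev
    simp only [if_pos rfl, if_neg (by norm_num : (0 : ℕ) ≠ 1), add_zero] at hev
    have := aux_eval (algebraMap ℤ_[p] (integralClosure ℤ_[p] K)) key _ _ 2 0 1
      ((p : ℤ_[p]) ^ 4) coeffA hev
    rw [this]
    simp [map_pow]
  have hG1 : PowerSeries.coeff (R := integralClosure ℤ_[p] K) 1 G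
      = (p : integralClosure ℤ_[p] K) ^ 3 := by
    have hev := hG 1
    rw [hgC, aux_coeff_form] at hev
    simp only [if_pos rfl, if_neg (by norm_num : (1 : ℕ) ≠ 0), zero_add] at hev
    have := aux_eval (algebraMap ℤ_[p] (integralClosure ℤ_[p] K)) key _ _ 1 0
      0 ((p : ℤ_[p]) ^ 3) coeffBg hev
    rw [this]
    simp [map_pow]
  have hGtail : ∀ j : ℕ, PowerSeries.coeff (R := integralClosure ℤ_[p] K) (j + 2) G = 0 := by
    intro j
    have hev := hG (j + 2)
    rw [hgC, aux_coeff_form] at hev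
    simp only [if_neg (by omega : ¬ (j + 2 = 0)), if_neg (by omega : ¬ (j + 2 = 1)),
      add_zero] at hev
    have := aux_eval (algebraMap ℤ_[p] (integralClosure ℤ_[p] K)) key _ _ 0 0 0 0
      (by simp) hev
    rw [this]
    simp
  -- the common unit
  have hu : IsUnit (1 + c ^ 2 * (p : integralClosure ℤ_[p] K) ^ 2) := by
    by_contra h
    obtain ⟨M, hMmax, hmem⟩ := exists_max_ideal_of_mem_nonunits (mem_nonunits_iff.mpr h)
    haveI := hMmax
    have hcomap : (M.comap (algebraMap ℤ_[p] (integralClosure ℤ_[p] K))).IsMaximal :=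
      Ideal.isMaximal_comap_of_isIntegral_of_isMaximal M
    have hcm : M.comap (algebraMap ℤ_[p] (integralClosure ℤ_[p] K))
        = IsLocalRing.maximalIdeal ℤ_[p] := IsLocalRing.eq_maximalIdeal hcomap
    have hpM : (p : integralClosure ℤ_[p] K) ∈ M := by
      have h1 : (p : ℤ_[p]) ∈ M.comap (algebraMap ℤ_[p] (integralClosure ℤ_[p] K)) := by
        rw [hcm]
        exact PadicInt.p_nonunit
      rw [Ideal.mem_comap, map_natCast] at h1
      exact h1
    have h2 : c ^ 2 * (p : integralClosure ℤ_[p] K) ^ 2 ∈ M := by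
      have := Ideal.mul_mem_left M (c ^ 2 * (p : integralClosure ℤ_[p] K)) hpM
      rwa [show c ^ 2 * (p : integralClosure ℤ_[p] K) * (p : integralClosure ℤ_[p] K)
        = c ^ 2 * (p : integralClosure ℤ_[p] K) ^ 2 by ring] at this
    have h3 : (1 : integralClosure ℤ_[p] K) ∈ M := by
      have := M.sub_mem hmem h2
      simpa using this
    exact hMmax.ne_top (Ideal.eq_top_of_isUnit_mem M h3 isUnit_one)
  -- factorizations
  have hp2 : (p : integralClosure ℤ_[p] K) ^ 2 = (ζ - 1) ^ 2 * c ^ 2 := by rw [hc]; ring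
  have e1 : (ζ - 1) ^ 2 + (p : integralClosure ℤ_[p] K) ^ 4
      = (ζ - 1) ^ 2 * (1 + c ^ 2 * (p : integralClosure ℤ_[p] K) ^ 2) := by
    have h4 : (p : integralClosure ℤ_[p] K) ^ 4
        = (p : integralClosure ℤ_[p] K) ^ 2 * (p : integralClosure ℤ_[p] K) ^ 2 := by ring
    rw [h4, hp2]; ring
  have e2 : (p : integralClosure ℤ_[p] K) ^ 3 * (ζ - 1) + (p : integralClosure ℤ_[p] K) ^ 3
      = (ζ - 1) ^ 2 * (c ^ 2 * (p : integralClosure ℤ_[p] K) * (ζ - 1)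
          + c ^ 2 * (p : integralClosure ℤ_[p] K)) := by
    have h4 : (p : integralClosure ℤ_[p] K) ^ 3
        = (p : integralClosure ℤ_[p] K) ^ 2 * (p : integralClosure ℤ_[p] K) := by ring
    rw [h4, hp2]; ring
  have e3 : (p : integralClosure ℤ_[p] K) ^ 3
      = (ζ - 1) ^ 2 * (c ^ 2 * (p : integralClosure ℤ_[p] K)) := by
    have h4 : (p : integralClosure ℤ_[p] K) ^ 3
        = (p : integralClosure ℤ_[p] K) ^ 2 * (p : integralClosure ℤ_[p] K) := by ring
    rw [h4, hp2]; ring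
  -- closed forms
  have hFeq : F = PowerSeries.C (R := integralClosure ℤ_[p] K)
        ((ζ - 1) ^ 2 * (1 + c ^ 2 * (p : integralClosure ℤ_[p] K) ^ 2))
      + PowerSeries.C (R := integralClosure ℤ_[p] K)
        ((ζ - 1) ^ 2 * (c ^ 2 * (p : integralClosure ℤ_[p] K) * (ζ - 1)
          + c ^ 2 * (p : integralClosure ℤ_[p] K))) * PowerSeries.X := by
    refine PowerSeries.ext fun n => ?_
    rw [aux_coeff_form, ← e1, ← e2]
    rcases n with _ | _ | n
    · simpa using hF0
    · simpa using hF1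
    · simpa using hFtail n
  have hGeq : G = PowerSeries.C (R := integralClosure ℤ_[p] K)
        ((ζ - 1) ^ 2 * (1 + c ^ 2 * (p : integralClosure ℤ_[p] K) ^ 2))
      + PowerSeries.C (R := integralClosure ℤ_[p] K)
        ((ζ - 1) ^ 2 * (c ^ 2 * (p : integralClosure ℤ_[p] K))) * PowerSeries.X := by
    refine PowerSeries.ext fun n => ?_
    rw [aux_coeff_form, ← e1, ← e3]
    rcases n with _ | _ | n
    · simpa using hG0
    · simpa using hG1
    · simpa using hGtail n
  have hFspan := aux_span (ζ - 1) _ _ F hFeq hu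
  have hGspan := aux_span (ζ - 1) _ _ G hGeq hu
  exact ⟨hFspan, hGspan, hFspan.trans hGspan.symm⟩
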